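/- For fixed constants r > 0, μ > r, n ∈ ℕ with n ≥ 1, and T > 0, the function f(x) = exp(2rT)·x²·(exp((log x)²/((μ−r)²·n·T)) − 1) is strictly convex on the interval [1, ∞). -/

import Mathlib

/-!
Writing `h t = exp (t ^ 2 / b) * (1 + t / b)`, the derivative of `x ^ 2 * (exp (log x ^ 2 / b) - 1)`
is `2 * x * (h (log x) - 1)`. For `b > 0`, `h` is strictly increasing on `[0, ∞)` with `h 0 = 1`,
so on `(1, ∞)` the derivative is a product of two positive, strictly increasing factors.
-/

open Real Set

theorem StrictConvexOn.const_mul {E : Type*} [AddCommMonoid E] [Module ℝ E] {s : Set E}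
    {f : E → ℝ} (hf : StrictConvexOn ℝ s f) {c : ℝ} (hc : 0 < c) :
    StrictConvexOn ℝ s (fun x => c * f x) :=
  ⟨hf.1, fun _ hx _ hy hxy _ _ ha hb hab => by
    simpa only [smul_eq_mul, mul_add, mul_left_comm c] using
      mul_lt_mul_of_pos_left (hf.2 hx hy hxy ha hb hab) hc⟩

section

variable {b : ℝ}

theorem hasDerivAt_sq_mul_exp_log_sq_div_sub_one {x : ℝ} (hx : x ≠ 0) :
    HasDerivAt (fun x => x ^ 2 * (exp (log x ^ 2 / b) - 1))
      (2 * x * (exp (log x ^ 2 / b) * (1 + log x / b) - 1)) x := by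
  have hexp := ((((hasDerivAt_log hx).fun_pow 2).div_const b).exp).sub_const 1
  refine ((hasDerivAt_pow 2 x).mul hexp).congr_deriv ?_
  field_simp
  ring

theorem strictMonoOn_exp_sq_div_mul_one_add_div (hb : 0 < b) :
    StrictMonoOn (fun t => exp (t ^ 2 / b) * (1 + t / b)) (Ici 0) := by
  rintro s (hs : 0 ≤ s) t - hst
  have hexp : exp (s ^ 2 / b) < exp (t ^ 2 / b) := by gcongr
  have hlin : 1 + s / b < 1 + t / b := by gcongr
  exact mul_lt_mul_of_pos hexp hlin (exp_pos _) (by have := hs.trans_lt hst; positivity)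

theorem strictConvexOn_sq_mul_exp_log_sq_div_sub_one (hb : 0 < b) :
    StrictConvexOn ℝ (Ici 1) (fun x => x ^ 2 * (exp (log x ^ 2 / b) - 1)) := by
  set h := fun t : ℝ => exp (t ^ 2 / b) * (1 + t / b)
  have hh : StrictMonoOn h (Ici 0) := strictMonoOn_exp_sq_div_mul_one_add_div hb
  have hderiv (x : ℝ) (hx : 0 < x) := hasDerivAt_sq_mul_exp_log_sq_div_sub_one (b := b) hx.ne'
  refine StrictMonoOn.strictConvexOn_of_deriv (convex_Ici 1)
    (fun x hx => (hderiv x (zero_lt_one.trans_le hx)).continuousAt.continuousWithinAt) ?_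
  rw [interior_Ici]
  rintro x (hx : 1 < x) y (hy : 1 < y) hxy
  rw [(hderiv x (zero_lt_one.trans hx)).deriv, (hderiv y (zero_lt_one.trans hy)).deriv]
  have hmono : h (log x) < h (log y) :=
    hh (log_nonneg hx.le) (log_nonneg hy.le) (log_lt_log (zero_lt_one.trans hx) hxy)
  have hone_lt : 1 < h (log x) := by
    simpa [h] using hh self_mem_Ici (log_nonneg hx.le) (log_pos hx)
  exact mul_lt_mul_of_pos (by linarith) (by linarith) (by linarith) (by linarith)

end

theorem strictConvexOn_variance_function_general
    (r μ T : ℝ) (n : ℕ) (hμ : r < μ) (hn : 1 ≤ n) (hT : 0 < T) :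
    StrictConvexOn ℝ (Set.Ici (1 : ℝ))
      (fun x : ℝ =>
        Real.exp (2 * r * T) * x ^ 2 *
          (Real.exp ((Real.log x) ^ 2 / ((μ - r) ^ 2 * n * T)) - 1)) := by
  have hn : (0 : ℝ) < n := by exact_mod_cast hn
  have hb : 0 < (μ - r) ^ 2 * n * T := by
    have := sub_pos.2 hμ
    positivity
  simpa only [mul_assoc] using
    (strictConvexOn_sq_mul_exp_log_sq_div_sub_one hb).const_mul (exp_pos (2 * r * T))

theorem strictConvexOn_variance_function
    (r μ T : ℝ) (n : ℕ) (hr : 0 < r) (hμ : r < μ) (hn : 1 ≤ n) (hT : 0 < T) :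
    StrictConvexOn ℝ (Set.Ici (1 : ℝ))
      (fun x : ℝ =>
        Real.exp (2 * r * T) * x ^ 2 *
          (Real.exp ((Real.log x) ^ 2 / ((μ - r) ^ 2 * n * T)) - 1)) :=
  strictConvexOn_variance_function_general r μ T n hμ hn hT
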